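/- Let A ∈ {0,*}^{n×n} and let B ∈ {0,*}^{n×q} be a dedicated input pattern. Then there exists a dedicated output pattern C on the n states with at most H(Â)+q rows (i.e., at most H(Â)+q dedicated sensors) such that (A,B,C) is GSIO. -/

import Mathlib

/-- The realization of a structured pattern (a set of free positions) determined by an
assignment `v` of complex values to its free entries: the matrix vanishes outside the
free positions. -/
def Pattern.realize {a b : Type*} [DecidableEq a] [DecidableEq b] (P : Finset (a × b))
    (v : {e // e ∈ P} → ℂ) : Matrix a b ℂ :=
  Matrix.of fun i j => if h : (i, j) ∈ P then v ⟨(i, j), h⟩ else 0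

/-- The structured system `(A, B, C)` (with zero feedthrough) is generically state and
input observable (GSIO): there is a nonzero polynomial in the free entries of the
patterns such that every realization at which it does not vanish has a Rosenbrock
matrix `[[Ã - s I, B̃], [C̃, 0]]` of full column rank `n + q` for every `s ∈ ℂ`. -/
def IsGSIO {n q m : ℕ} (A : Finset (Fin n × Fin n)) (B : Finset (Fin n × Fin q))
    (C : Finset (Fin m × Fin n)) : Prop :=
  ∃ p : MvPolynomial (({e // e ∈ A} ⊕ {e // e ∈ B}) ⊕ {e // e ∈ C}) ℂ, p ≠ 0 ∧
    ∀ v : (({e // e ∈ A} ⊕ {e // e ∈ B}) ⊕ {e // e ∈ C}) → ℂ,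
      MvPolynomial.eval v p ≠ 0 → ∀ s : ℂ,
        (Matrix.fromBlocks
            (Pattern.realize A (fun e => v (Sum.inl (Sum.inl e))) -
              s • (1 : Matrix (Fin n) (Fin n) ℂ))
            (Pattern.realize B (fun e => v (Sum.inl (Sum.inr e))))
            (Pattern.realize C (fun e => v (Sum.inr e))) 0).rank = n + q

/-- The structured pair `(M, C)` is structurally observable: there is a nonzero
polynomial in the free entries such that every realization at which it does not vanish
has `[M̃ - s I; C̃]` of full column rank for every `s ∈ ℂ`. -/
def IsStructObs {ι : Type*} [Fintype ι] [DecidableEq ι] {m : ℕ}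
    (M : Finset (ι × ι)) (C : Finset (Fin m × ι)) : Prop :=
  ∃ p : MvPolynomial ({e // e ∈ M} ⊕ {e // e ∈ C}) ℂ, p ≠ 0 ∧
    ∀ v : ({e // e ∈ M} ⊕ {e // e ∈ C}) → ℂ,
      MvPolynomial.eval v p ≠ 0 → ∀ s : ℂ,
        (Matrix.fromRows
            (Pattern.realize M (fun e => v (Sum.inl e)) - s • (1 : Matrix ι ι ℂ))
            (Pattern.realize C (fun e => v (Sum.inr e)))).rank = Fintype.card ι

/-- `Hmin M` is the minimum number of dedicated sensors (rows each having exactly one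
free entry) in an output pattern `C` making the pair `(M, C)` structurally observable. -/
noncomputable def Hmin {ι : Type*} [Fintype ι] [DecidableEq ι] (M : Finset (ι × ι)) : ℕ :=
  sInf {k : ℕ | ∃ C : Finset (Fin k × ι),
    (∀ i : Fin k, ∃! j : ι, (i, j) ∈ C) ∧ IsStructObs M C}

/-- The auxiliary pattern `Â = [[A', B], [0, 0]]` on the index type `Fin n ⊕ Fin q`
(states together with inputs viewed as extra state vertices), where `A'` equals `A`
except that every row of `A` indexed by the set `I` of input-driven states is set to
zero. -/
def auxPattern {n q : ℕ} (A : Finset (Fin n × Fin n)) (B : Finset (Fin n × Fin q))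
    (I : Finset (Fin n)) : Finset ((Fin n ⊕ Fin q) × (Fin n ⊕ Fin q)) :=
  ((A.filter fun e => e.1 ∉ I).image fun e => (Sum.inl e.1, Sum.inl e.2)) ∪
    (B.image fun e => (Sum.inl e.1, Sum.inr e.2))

/-! Take an optimal dedicated sensor placement `C₀` for `Â`, move each sensor sitting on an
input vertex to the state that input drives, and add one sensor on every input-driven state.
If `(x, u)` lies in the kernel of the Rosenbrock matrix, the sensors make `x` vanish on the
input-driven states, where `Â` has zero rows, and `B̃ u` vanishes on the other states, where `Â`
agrees with `A`; hence `(x, 0)` lies in the kernel of `[Â - sI; C̃₀]`, so `x = 0`, and then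
`B̃ u = 0` forces `u = 0` because the inputs are dedicated. Genericity transfers because the
free entries of `Â` and `C₀` are injectively identified with free entries of `A`, `B` and `C`. -/

open Matrix MvPolynomial

theorem Matrix.rank_eq_card_iff_forall_mulVec_eq_zero {m n K : Type*} [Field K] [Fintype n]
    (M : Matrix m n K) : M.rank = Fintype.card n ↔ ∀ x, M *ᵥ x = 0 → x = 0 := by
  rw [← ker_mulVecLin_eq_bot_iff, LinearMap.ker_eq_bot, coe_mulVecLin, mulVec_injective_iff,
    linearIndependent_iff_card_eq_finrank_span, rank_eq_finrank_span_cols, Set.finrank, eq_comm]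

section Generic

variable {R σ τ : Type*} [CommRing R]

/-- `IsGSIO` and `IsStructObs` unfold to statements `IsGeneric P`, so the lemmas below apply to
them directly. -/
def IsGeneric (P : (σ → R) → Prop) : Prop :=
  ∃ p : MvPolynomial σ R, p ≠ 0 ∧ ∀ v, eval v p ≠ 0 → P v

theorem IsGeneric.mono {P Q : (σ → R) → Prop} (hP : IsGeneric P) (hPQ : ∀ v, P v → Q v) :
    IsGeneric Q :=
  let ⟨p, hp, hpP⟩ := hP
  ⟨p, hp, fun v hv => hPQ v (hpP v hv)⟩

theorem IsGeneric.and [IsDomain R] {P Q : (σ → R) → Prop} (hP : IsGeneric P)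
    (hQ : IsGeneric Q) : IsGeneric fun v => P v ∧ Q v := by
  obtain ⟨p, hp, hpP⟩ := hP
  obtain ⟨r, hr, hrQ⟩ := hQ
  refine ⟨p * r, mul_ne_zero hp hr, fun v hv => ?_⟩
  rw [eval_mul] at hv
  exact ⟨hpP v (left_ne_zero_of_mul hv), hrQ v (right_ne_zero_of_mul hv)⟩

theorem IsGeneric.comp {P : (σ → R) → Prop} (hP : IsGeneric P) (e : σ ↪ τ) :
    IsGeneric fun v : τ → R => P (v ∘ e) := by
  obtain ⟨p, hp, hpP⟩ := hP
  refine ⟨rename e p, fun h => hp (rename_injective e e.injective (by rw [h, map_zero])),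
    fun v hv => hpP _ ?_⟩
  rwa [eval_rename] at hv

theorem isGeneric_forall_ne_zero [IsDomain R] [Fintype σ] :
    IsGeneric fun v : σ → R => ∀ i, v i ≠ 0 := by
  refine ⟨∏ i, X i, Finset.prod_ne_zero_iff.2 fun i _ => X_ne_zero i, fun v hv i => ?_⟩
  rw [eval_prod, Finset.prod_ne_zero_iff] at hv
  simpa using hv i (Finset.mem_univ i)

end Generic

namespace Pattern

theorem row_injective_of_mem_iff {a b : Type*} {P : Finset (a × b)} {g : a → b}
    (hg : ∀ i j, (i, j) ∈ P ↔ j = g i) :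
    Function.Injective fun e : {e // e ∈ P} => e.1.1 := by
  rintro ⟨⟨i, j⟩, he⟩ ⟨⟨i', j'⟩, he'⟩ (rfl : i = i')
  exact Subtype.ext (Prod.ext rfl (((hg i j).1 he).trans ((hg i j').1 he').symm))

variable {a b : Type*} [DecidableEq a] [DecidableEq b] [Fintype b]

theorem realize_mulVec_apply_of_row_eq {P : Finset (a × b)} (v : {e // e ∈ P} → ℂ)
    (x : b → ℂ) {i : a} {j : b} (hrow : ∀ j', (i, j') ∈ P ↔ j' = j) :
    (realize P v *ᵥ x) i = v ⟨(i, j), (hrow j).2 rfl⟩ * x j := by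
  rw [mulVec, dotProduct, Finset.sum_eq_single j]
  · simp [realize, (hrow j).2 rfl]
  · intro j' _ hj'
    simp [realize, hrow, hj']
  · simp

theorem realize_mulVec_apply_of_row_empty {P : Finset (a × b)} (v : {e // e ∈ P} → ℂ)
    (x : b → ℂ) {i : a} (hrow : ∀ j, (i, j) ∉ P) : (realize P v *ᵥ x) i = 0 :=
  Finset.sum_eq_zero fun j _ => by simp [realize, hrow j]

theorem apply_eq_zero_of_realize_mulVec_apply_eq_zero {P : Finset (a × b)}
    {v : {e // e ∈ P} → ℂ} (hv : ∀ e, v e ≠ 0) {x : b → ℂ} {i : a} {j : b}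
    (hrow : ∀ j', (i, j') ∈ P ↔ j' = j) (hx : (realize P v *ᵥ x) i = 0) : x j = 0 := by
  rw [realize_mulVec_apply_of_row_eq v x hrow] at hx
  exact (mul_eq_zero.1 hx).resolve_left (hv _)

end Pattern

def graphPattern {a b : Type*} [Fintype a] (t : a → b) : Finset (a × b) :=
  Finset.univ.map ⟨fun i => (i, t i), fun _ _ h => congrArg Prod.fst h⟩

section Graph

variable {a b : Type*} [Fintype a] (t : a → b)

@[simp]
theorem mem_graphPattern {i : a} {j : b} : (i, j) ∈ graphPattern t ↔ j = t i := by
  simp only [graphPattern, Finset.mem_map, Finset.mem_univ, true_and]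
  refine ⟨fun ⟨i', h⟩ => ?_, fun h => ⟨i, by rw [h]; rfl⟩⟩
  obtain ⟨rfl, rfl⟩ := Prod.mk.inj h
  rfl

theorem existsUnique_mem_graphPattern (i : a) : ∃! j, (i, j) ∈ graphPattern t :=
  ⟨t i, (mem_graphPattern t).2 rfl, fun _ => (mem_graphPattern t).1⟩

def graphPatternVar (i : a) : {e // e ∈ graphPattern t} :=
  ⟨(i, t i), (mem_graphPattern t).2 rfl⟩

theorem graphPatternVar_injective : Function.Injective (graphPatternVar t) :=
  fun _ _ h => congrArg (fun e => e.1.1) h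

end Graph

theorem isStructObs_graphPattern {ι : Type*} [Fintype ι] [DecidableEq ι] {m : ℕ}
    (M : Finset (ι × ι)) {t : Fin m → ι} (ht : Function.Surjective t) :
    IsStructObs M (graphPattern t) := by
  refine isGeneric_forall_ne_zero.mono fun v hv s => ?_
  rw [rank_eq_card_iff_forall_mulVec_eq_zero]
  intro x hx
  rw [fromRows_mulVec] at hx
  funext i
  obtain ⟨r, rfl⟩ := ht i
  exact Pattern.apply_eq_zero_of_realize_mulVec_apply_eq_zero (fun e => hv (.inr e))
    (fun _ => mem_graphPattern t) (congrFun hx (.inr r))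

theorem exists_isStructObs_Hmin {ι : Type*} [Fintype ι] [DecidableEq ι] (M : Finset (ι × ι)) :
    ∃ (C : Finset (Fin (Hmin M) × ι)) (g : Fin (Hmin M) → ι),
      (∀ i j, (i, j) ∈ C ↔ j = g i) ∧ IsStructObs M C := by
  obtain ⟨C, hC, hobs⟩ : Hmin M ∈ _ :=
    Nat.sInf_mem ⟨_, _, existsUnique_mem_graphPattern _,
      isStructObs_graphPattern M (Fintype.equivFin ι).symm.surjective⟩
  choose g hg using hC
  exact ⟨C, g, fun i j => ⟨(hg i).2 j, fun h => h ▸ (hg i).1⟩, hobs⟩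

section AuxPattern

variable {n q : ℕ} (A : Finset (Fin n × Fin n)) (B : Finset (Fin n × Fin q))
  (I : Finset (Fin n))

theorem inl_inl_mem_auxPattern {i j : Fin n} :
    (Sum.inl i, Sum.inl j) ∈ auxPattern A B I ↔ (i, j) ∈ A ∧ i ∉ I := by
  simp [auxPattern]

theorem inl_inr_mem_auxPattern {i : Fin n} {j : Fin q} :
    (Sum.inl i, Sum.inr j) ∈ auxPattern A B I ↔ (i, j) ∈ B := by
  simp [auxPattern]

theorem inr_notMem_auxPattern {a : Fin q} {c : Fin n ⊕ Fin q} :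
    (Sum.inr a, c) ∉ auxPattern A B I := by
  simp [auxPattern]

def auxPatternVars : {e // e ∈ auxPattern A B I} ↪ {e // e ∈ A} ⊕ {e // e ∈ B} where
  toFun
    | ⟨(.inl i, .inl j), h⟩ => .inl ⟨(i, j), ((inl_inl_mem_auxPattern A B I).1 h).1⟩
    | ⟨(.inl i, .inr j), h⟩ => .inr ⟨(i, j), (inl_inr_mem_auxPattern A B I).1 h⟩
    | ⟨(.inr _, _), h⟩ => absurd h (inr_notMem_auxPattern A B I)
  inj' := by
    rintro ⟨⟨i | i, j | j⟩, h⟩ ⟨⟨i' | i', j' | j'⟩, h'⟩ heq <;>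
      first
      | exact absurd h (inr_notMem_auxPattern A B I)
      | exact absurd h' (inr_notMem_auxPattern A B I)
      | simp_all

theorem realize_auxPattern (a : {e // e ∈ A} ⊕ {e // e ∈ B} → ℂ) :
    Pattern.realize (auxPattern A B I) (fun e => a (auxPatternVars A B I e)) =
      fromBlocks (of fun i => if i ∈ I then 0 else Pattern.realize A (fun e => a (.inl e)) i)
        (Pattern.realize B (fun e => a (.inr e))) 0 0 := by
  ext (i | i) (j | j)
  · by_cases hi : i ∈ I
    · simp [Pattern.realize, inl_inl_mem_auxPattern, hi]
    · by_cases hij : (i, j) ∈ A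
      · simp only [Pattern.realize, of_apply, inl_inl_mem_auxPattern, hij, hi,
          not_false_eq_true, and_self, ↓reduceDIte, fromBlocks_apply₁₁, ↓reduceIte]
        rfl
      · simp [Pattern.realize, inl_inl_mem_auxPattern, hi, hij]
  · by_cases hij : (i, j) ∈ B
    · simp only [Pattern.realize, of_apply, inl_inr_mem_auxPattern, hij, ↓reduceDIte,
        fromBlocks_apply₁₂]
      rfl
    · simp [Pattern.realize, inl_inr_mem_auxPattern, hij]
  all_goals simp [Pattern.realize, inr_notMem_auxPattern]

end AuxPattern

theorem eq_zero_of_auxPattern_observable {n q k : ℕ} {A : Finset (Fin n × Fin n)}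
    {B : Finset (Fin n × Fin q)} {I : Finset (Fin n)} {C₀ : Finset (Fin k × (Fin n ⊕ Fin q))}
    {g : Fin k → Fin n ⊕ Fin q} (hg : ∀ i j, (i, j) ∈ C₀ ↔ j = g i)
    {a : {e // e ∈ A} ⊕ {e // e ∈ B} → ℂ} {c : {e // e ∈ C₀} → ℂ} {s : ℂ}
    (hobs : (fromRows
      (Pattern.realize (auxPattern A B I) (fun e => a (auxPatternVars A B I e)) - s • 1)
      (Pattern.realize C₀ c)).rank = Fintype.card (Fin n ⊕ Fin q))
    {x : Fin n → ℂ}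
    (hxA : ∀ i ∉ I, (Pattern.realize A (fun e => a (.inl e)) *ᵥ x) i = s * x i)
    (hxI : ∀ i ∈ I, x i = 0) (hxg : ∀ i, Sum.elim x 0 (g i) = 0) : x = 0 := by
  have hw : Sum.elim x (0 : Fin q → ℂ) = 0 := by
    refine (rank_eq_card_iff_forall_mulVec_eq_zero _).1 hobs _ ?_
    rw [fromRows_mulVec, realize_auxPattern, sub_mulVec, fromBlocks_mulVec]
    simp only [smul_mulVec, one_mulVec]
    ext ((i | i) | i)
    · by_cases hi : i ∈ I
      · simp [mulVec, hi, hxI i hi]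
      · simp [mulVec, hi, ← hxA i hi]
    · simp
    · simp [Pattern.realize_mulVec_apply_of_row_eq c _ (hg i), hxg]
  exact funext fun i => congrFun hw (.inl i)

theorem rank_rosenbrock_eq {n q m : ℕ} {A : Finset (Fin n × Fin n)}
    {B : Finset (Fin n × Fin q)} {C : Finset (Fin m × Fin n)} {f : Fin q → Fin n}
    (hf : Function.Injective f) (hB : ∀ i j, (i, j) ∈ B ↔ i = f j) {t : Fin m → Fin n}
    (hC : ∀ i j, (i, j) ∈ C ↔ j = t i)
    {a : {e // e ∈ A} → ℂ} {b : {e // e ∈ B} → ℂ} {c : {e // e ∈ C} → ℂ}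
    (hb : ∀ e, b e ≠ 0) (hc : ∀ e, c e ≠ 0) {s : ℂ}
    (hobs : ∀ x : Fin n → ℂ,
      (∀ i ∉ Finset.univ.image f, (Pattern.realize A a *ᵥ x) i = s * x i) →
      (∀ r, x (t r) = 0) → x = 0) :
    (fromBlocks (Pattern.realize A a - s • 1) (Pattern.realize B b) (Pattern.realize C c) 0).rank
      = n + q := by
  rw [show n + q = Fintype.card (Fin n ⊕ Fin q) by simp, rank_eq_card_iff_forall_mulVec_eq_zero]
  intro z hz
  rw [fromBlocks_mulVec] at hz
  set x := z ∘ Sum.inl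
  set u := z ∘ Sum.inr
  have hdyn i : ((Pattern.realize A a - s • 1) *ᵥ x) i + (Pattern.realize B b *ᵥ u) i = 0 :=
    congrFun hz (.inl i)
  have hx : x = 0 := by
    refine hobs x (fun i hi => ?_) fun r => Pattern.apply_eq_zero_of_realize_mulVec_apply_eq_zero
      hc (hC r) (by simpa using congrFun hz (.inr r))
    have hBi : (Pattern.realize B b *ᵥ u) i = 0 :=
      Pattern.realize_mulVec_apply_of_row_empty b u fun j hij => hi (by simp [(hB i j).1 hij])
    simpa [hBi, sub_eq_zero, sub_mulVec, smul_mulVec] using hdyn i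
  have hu : u = 0 := by
    refine funext fun j => Pattern.apply_eq_zero_of_realize_mulVec_apply_eq_zero hb
      (fun j' => (hB (f j) j').trans (hf.eq_iff.trans eq_comm)) ?_
    simpa [hx] using hdyn (f j)
  rw [← Sum.elim_comp_inl_inr z, ← Sum.elim_zero_zero]
  exact congrArg₂ Sum.elim hx hu

/-- For a structured system `(A, B)` with `q` dedicated inputs (input `j` drives state
`f j`, `f` injective), there exists a dedicated output pattern `C` on the `n` states
with at most `H(Â) + q` rows (dedicated sensors) such that `(A, B, C)` is GSIO, where
`Â` is the auxiliary pattern. -/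
theorem GSIO_upper_bound_sensor_placement (n q : ℕ)
    (A : Finset (Fin n × Fin n)) (B : Finset (Fin n × Fin q))
    (f : Fin q → Fin n) (hf : Function.Injective f)
    (hB : ∀ (i : Fin n) (j : Fin q), (i, j) ∈ B ↔ i = f j) :
    ∃ (m : ℕ) (C : Finset (Fin m × Fin n)),
      m ≤ Hmin (auxPattern A B (Finset.image f Finset.univ)) + q ∧
      (∀ i : Fin m, ∃! j : Fin n, (i, j) ∈ C) ∧ IsGSIO A B C := by
  obtain ⟨C₀, g, hg, hobs⟩ :=
    exists_isStructObs_Hmin (auxPattern A B (Finset.image f Finset.univ))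
  let t := Fin.append (fun i => Sum.elim id f (g i)) f
  let sensorVars : {e // e ∈ C₀} ↪ {e // e ∈ graphPattern t} :=
    ⟨fun e => graphPatternVar t (Fin.castAdd q e.1.1), (graphPatternVar_injective t).comp
      ((Fin.castAdd_injective _ _).comp (Pattern.row_injective_of_mem_iff hg))⟩
  refine ⟨_, graphPattern t, le_rfl, existsUnique_mem_graphPattern t, ?_⟩
  refine ((IsGeneric.comp hobs ((auxPatternVars A B _).sumMap sensorVars)).and
    isGeneric_forall_ne_zero).mono fun v ⟨hv, hne⟩ s => ?_
  refine rank_rosenbrock_eq hf hB (fun _ _ => mem_graphPattern t) (fun _ => hne _)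
    (fun _ => hne _) fun x hxA hxt => ?_
  refine eq_zero_of_auxPattern_observable (a := fun e => v (.inl e)) hg (hv s) hxA ?_ ?_
  · simp only [Finset.mem_image, Finset.mem_univ, true_and]
    rintro _ ⟨j, rfl⟩
    simpa [t] using hxt (Fin.natAdd _ j)
  · intro i
    have hxi := hxt (Fin.castAdd q i)
    rcases hgi : g i with j | j
    · simpa [t, hgi] using hxi
    · rfl
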